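/- arXiv:2309.15270 — 4 statements merged into one kernel-verified Lean document; each statement's English description precedes it below -/
import Mathlib

section
/- If a word u is a suffix of the word u·w, where w is a nonempty word, then u is a suffix of w^{|u|}. -/
/-- k-fold concatenation of a word with itself. -/
def wpow {α : Type*} (w : List α) : ℕ → List α
  | 0 => []
  | k + 1 => w ++ wpow w k

lemma wpow_length {α : Type*} (w : List α) (n : ℕ) :
    (wpow w n).length = n * w.length := by
  induction n with
  | zero => simp [wpow]
  | succ k ih => simp [wpow, ih]; ring

lemma suffix_of_suffix_append {α : Type*} {u a b : List α}
    (h : u <:+ a ++ b) (hl : u.length ≤ b.length) : u <:+ b := by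
  obtain ⟨s, hs⟩ := h
  have hlen : a.length ≤ s.length := by
    have := congrArg List.length hs
    simp at this; omega
  have hpre : a <+: s :=
    List.prefix_of_prefix_length_le (hs ▸ List.prefix_append a b) ⟨u, hs⟩ hlen
  obtain ⟨s', rfl⟩ := hpre
  rw [List.append_assoc] at hs
  exact ⟨s', (List.append_cancel_left hs)⟩

lemma key {α : Type*} {u w t : List α} (ht : t ++ u = u ++ w) (n : ℕ) :
    wpow t n ++ u = u ++ wpow w n := by
  induction n with
  | zero => simp [wpow]
  | succ k ih =>
    simp only [wpow]
    rw [List.append_assoc, ih, ← List.append_assoc, ht, List.append_assoc]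

/-- If a word `u` is a suffix of `u ++ w` with `w` nonempty, then `u` is a
suffix of `w^{|u|}`. -/
theorem stmt_1 {α : Type*} (u w : List α) (hw : w ≠ []) (h : u <:+ u ++ w) :
    u <:+ wpow w u.length := by
  obtain ⟨t, ht⟩ := h
  have := key ht u.length
  refine suffix_of_suffix_append (a := u) (b := wpow w u.length) ⟨wpow t u.length, this⟩ ?_
  rw [wpow_length]
  have : 1 ≤ w.length := List.length_pos_iff.mpr hw
  nlinarith
end

section
/- For every word q, the following are equivalent: (1) whenever q = u·R·v·R·w for a letter R and words u, v, w, q is a prefix of u·R·v·R·v·R·w; (2) there exist a natural number k and words v, w such that v·w has no repeated letters and q is a prefix of w·v^k. -/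
/-- Condition C1: whenever `q = u·R·v·R·w`, `q` is a prefix of `u·R·v·R·v·R·w`. -/
def CondC1 {α : Type*} (q : List α) : Prop :=
  ∀ (u v w : List α) (R : α), q = u ++ [R] ++ v ++ [R] ++ w →
    q <+: u ++ [R] ++ v ++ [R] ++ v ++ [R] ++ w

/-- Condition B1: for some `k` there are words `v, w` with `v·w` self-join-free
(no repeated letters) and `q` a prefix of `w·v^k`. -/
def CondB1 {α : Type*} (q : List α) : Prop :=
  ∃ (k : ℕ) (v w : List α), (v ++ w).Nodup ∧ q <+: w ++ wpow v k

/-! Split a word with a repeated letter at its first repetition, `q = u·R·v·R·w` with `u·R·v`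
self-join-free. Condition C1 says that `R·w` is a prefix of `R·v·R·w`, hence of
`(R·v)ⁿ·R·w` for every `n`, so `q` is a prefix of `u·(R·v)ⁿ⁺¹` once `n ≥ |R·w|`.

Conversely, in `w·vᵏ` with `v·w` self-join-free, two equal letters can only sit in the periodic
part, at a distance divisible by `|v|`; so the suffix starting at the second one is a prefix of
the suffix starting at the first. That is C1 for `w·vᵏ`, and C1 passes to prefixes. -/

open List

section

variable {α : Type*}

section wpow

variable (v : List α)

@[simp]
theorem wpow_zero : wpow v 0 = [] := rfl

theorem wpow_succ (k : ℕ) : wpow v (k + 1) = v ++ wpow v k := rfl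

theorem wpow_succ' (k : ℕ) : wpow v (k + 1) = wpow v k ++ v := by
  induction k with
  | zero => simp [wpow_succ]
  | succ k ih =>
    show v ++ wpow v (k + 1) = (v ++ wpow v k) ++ v
    rw [ih, append_assoc]

@[simp]
theorem length_wpow (k : ℕ) : (wpow v k).length = k * v.length := by
  induction k with
  | zero => simp
  | succ k ih => simp [wpow_succ, ih, Nat.succ_mul, Nat.add_comm]

theorem mem_of_mem_wpow {k : ℕ} {x : α} (h : x ∈ wpow v k) : x ∈ v := by
  induction k with
  | zero => simp at h
  | succ k ih =>
    rw [wpow_succ, mem_append] at h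
    exact h.elim id ih

theorem getElem?_wpow {k i : ℕ} (hi : i < k * v.length) :
    (wpow v k)[i]? = v[i % v.length]? := by
  induction k generalizing i with
  | zero => simp at hi
  | succ k ih =>
    rw [wpow_succ]
    rcases Nat.lt_or_ge i v.length with hiv | hiv
    · rw [getElem?_append_left hiv, Nat.mod_eq_of_lt hiv]
    · rw [getElem?_append_right hiv, ih (by rw [Nat.succ_mul] at hi; omega),
        ← Nat.mod_eq_sub_mod hiv]

theorem drop_add_length_wpow_prefix (k j : ℕ) :
    (wpow v k).drop (j + v.length) <+: (wpow v k).drop j := by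
  cases k with
  | zero => simp
  | succ k =>
    rw [wpow_succ, Nat.add_comm, drop_length_add_append, ← wpow_succ, wpow_succ']
    exact (prefix_append _ _).drop j

theorem drop_add_mul_length_wpow_prefix (k j m : ℕ) :
    (wpow v k).drop (j + m * v.length) <+: (wpow v k).drop j := by
  induction m with
  | zero => simp
  | succ m ih =>
    rw [Nat.succ_mul, ← Nat.add_assoc]
    exact (drop_add_length_wpow_prefix v k _).trans ih

end wpow

theorem prefix_wpow_of_prefix_append {c t : List α} (hc : c ≠ []) (h : t <+: c ++ t) :
    t <+: wpow c t.length := by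
  have hiter : ∀ n, t <+: wpow c n ++ t := by
    intro n
    induction n with
    | zero => simp
    | succ n ih =>
      rw [wpow_succ, append_assoc]
      exact h.trans ((prefix_append_right_inj c).mpr ih)
  refine prefix_of_prefix_length_le (hiter t.length) (prefix_append _ _) ?_
  simpa using Nat.le_mul_of_pos_right _ (length_pos_iff.mpr hc)

theorem exists_eq_append_of_not_nodup {l : List α} (h : ¬ l.Nodup) :
    ∃ u v w R, l = u ++ R :: v ++ R :: w ∧ (u ++ R :: v).Nodup := by
  induction l using reverseRecOn with
  | nil => simp at h
  | append_singleton l x ih =>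
    by_cases hl : l.Nodup
    · have hx : x ∈ l := by
        by_contra hx
        refine h (nodup_append.mpr ⟨hl, nodup_singleton x, ?_⟩)
        simp only [mem_singleton]
        rintro a ha _ rfl rfl
        exact hx ha
      obtain ⟨u, v, rfl⟩ := append_of_mem hx
      exact ⟨u, v, [], x, by simp, hl⟩
    · obtain ⟨u, v, w, R, rfl, hnd⟩ := ih hl
      exact ⟨u, v, w ++ [x], R, by simp, hnd⟩

theorem exists_eq_add_mul_of_getElem?_eq {v w : List α} {k a b : ℕ} (hvw : (v ++ w).Nodup)
    (hab : a < b) (hb : b < (w ++ wpow v k).length)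
    (h : (w ++ wpow v k)[a]? = (w ++ wpow v k)[b]?) :
    ∃ i m, a = w.length + i ∧ b = w.length + (i + m * v.length) := by
  obtain ⟨hv, hw, hdisj⟩ := nodup_append.mp hvw
  rcases Nat.lt_or_ge a w.length with haw | haw
  · rw [getElem?_append_left haw, getElem?_eq_getElem haw] at h
    rcases Nat.lt_or_ge b w.length with hbw | hbw
    · rw [getElem?_append_left hbw, ← getElem?_eq_getElem haw] at h
      exact absurd ((getElem?_inj haw hw).mp h) hab.ne
    · rw [getElem?_append_right hbw] at h
      exact absurd rfl (hdisj _ (mem_of_mem_wpow v (mem_of_getElem? h.symm)) _ (getElem_mem haw))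
  · obtain ⟨i, rfl⟩ := Nat.exists_eq_add_of_le haw
    obtain ⟨j, rfl⟩ := Nat.exists_eq_add_of_le (haw.trans hab.le)
    simp only [length_append, length_wpow] at hb
    rw [getElem?_append_right haw, getElem?_append_right (by omega), Nat.add_sub_cancel_left,
      Nat.add_sub_cancel_left, getElem?_wpow v (by omega), getElem?_wpow v (by omega)] at h
    have hpos : 0 < v.length := Nat.pos_of_mul_pos_left (by omega : 0 < k * v.length)
    have hmod := (getElem?_inj (Nat.mod_lt _ hpos) hv).mp h
    obtain ⟨m, hm⟩ := Nat.dvd_of_mod_eq_zero (Nat.sub_mod_eq_zero_of_mod_eq hmod.symm)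
    exact ⟨i, m, rfl, by rw [Nat.mul_comm]; omega⟩

theorem drop_prefix_drop_of_getElem?_eq {v w : List α} {k a b : ℕ} (hvw : (v ++ w).Nodup)
    (hab : a < b) (hb : b < (w ++ wpow v k).length)
    (h : (w ++ wpow v k)[a]? = (w ++ wpow v k)[b]?) :
    (w ++ wpow v k).drop b <+: (w ++ wpow v k).drop a := by
  obtain ⟨i, m, rfl, rfl⟩ := exists_eq_add_mul_of_getElem?_eq hvw hab hb h
  rw [drop_length_add_append, drop_length_add_append]
  exact drop_add_mul_length_wpow_prefix v k i m

theorem condC1_iff {q : List α} :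
    CondC1 q ↔
      ∀ (u v w : List α) (R : α), q = u ++ [R] ++ v ++ [R] ++ w → w <+: v ++ [R] ++ w := by
  refine forall₄_congr fun u v w R => imp_congr_right fun hq => ?_
  subst hq
  simp only [append_assoc, cons_append, prefix_append_right_inj, cons_prefix_cons,
    true_and]

theorem CondC1.of_prefix {q N : List α} (hN : CondC1 N) (hq : q <+: N) : CondC1 q := by
  rw [condC1_iff] at hN ⊢
  rintro u v w R rfl
  obtain ⟨t, rfl⟩ := hq
  have hwt : w ++ t <+: v ++ [R] ++ (w ++ t) := hN u v (w ++ t) R (by simp)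
  rw [← append_assoc] at hwt
  exact prefix_of_prefix_length_le ((prefix_append w t).trans hwt) (prefix_append _ t)
    (by simp; omega)

theorem condC1_append_wpow {v w : List α} (hvw : (v ++ w).Nodup) (k : ℕ) :
    CondC1 (w ++ wpow v k) := by
  rw [condC1_iff]
  intro u x y R hN
  have hL₁ : u ++ [R] ++ x ++ [R] ++ y = u ++ R :: (x ++ [R] ++ y) := by simp
  have hL₂ : u ++ [R] ++ x ++ [R] ++ y = (u ++ [R] ++ x) ++ R :: y := by simp
  have hRa : (w ++ wpow v k)[u.length]? = some R := by rw [hN, hL₁]; simp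
  have hRb : (w ++ wpow v k)[(u ++ [R] ++ x).length]? = some R := by rw [hN, hL₂]; simp
  have hdrop := drop_prefix_drop_of_getElem?_eq hvw (by simp) (by rw [hN]; simp)
    (hRa.trans hRb.symm)
  have hda : (u ++ [R] ++ x ++ [R] ++ y).drop u.length = R :: (x ++ [R] ++ y) := by
    rw [hL₁, drop_left]
  have hdb : (u ++ [R] ++ x ++ [R] ++ y).drop (u ++ [R] ++ x).length = R :: y := by
    rw [hL₂, drop_left]
  rw [hN, hda, hdb, cons_prefix_cons] at hdrop
  exact hdrop.2

end

theorem stmt_3 {α : Type*} (q : List α) : CondC1 q ↔ CondB1 q := by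
  constructor
  · intro hC
    by_cases hq : q.Nodup
    · exact ⟨0, [], q, by simpa using hq, by simp⟩
    obtain ⟨u, v, w, R, rfl, hnd⟩ := exists_eq_append_of_not_nodup hq
    have hw : w <+: v ++ [R] ++ w := condC1_iff.mp hC u v w R (by simp)
    have hcycle : R :: w <+: (R :: v) ++ R :: w := by simpa using hw
    refine ⟨(R :: w).length + 1, R :: v, u, nodup_append_comm.mp hnd, ?_⟩
    rw [wpow_succ, ← append_assoc]
    exact (prefix_append_right_inj _).mpr (prefix_wpow_of_prefix_append (cons_ne_nil _ _) hcycle)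
  · rintro ⟨k, v, w, hvw, hq⟩
    exact (condC1_append_wpow hvw k).of_prefix hq
end

section
/- Let q be a word over an alphabet. Define Pump(q) as the smallest language containing q and closed under rewinding: if u·R·v·R·w ∈ Pump(q) for a letter R and words u, v, w, then u·R·v·R·v·R·w ∈ Pump(q). Then q satisfies condition C1 (whenever q = u·R·v·R·w, q is a prefix of u·R·v·R·v·R·w) if and only if q is a prefix of every word in Pump(q). -/
/-- `Pump q` : the smallest language containing `q` and closed under rewinding. -/
inductive Pump {α : Type*} (q : List α) : List α → Prop
  | base : Pump q q
  | rewind (u v w : List α) (R : α) :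
      Pump q (u ++ [R] ++ v ++ [R] ++ w) →
      Pump q (u ++ [R] ++ v ++ [R] ++ v ++ [R] ++ w)

theorem stmt_4 {α : Type*} (q : List α) :
    CondC1 q ↔ ∀ p, Pump q p → q <+: p := by
  have tot : ∀ (l₁ l₂ l₃ : List α), l₁ <+: l₃ → l₂ <+: l₃ → l₁ <+: l₂ ∨ l₂ <+: l₁ := by
    intro l₁ l₂ l₃ h1 h2
    rcases le_total l₁.length l₂.length with h | h
    · left
      rw [List.prefix_iff_eq_take.mp h1, List.prefix_iff_eq_take.mp h2]
      exact List.take_isPrefix_take.mpr (Or.inl h)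
    · right
      rw [List.prefix_iff_eq_take.mp h1, List.prefix_iff_eq_take.mp h2]
      exact List.take_isPrefix_take.mpr (Or.inl h)
  constructor
  · intro hc p hp
    induction hp with
    | base => exact List.prefix_refl q
    | rewind u v w R _ ih =>
      have ha : (u ++ [R] ++ v ++ [R]) <+: (u ++ [R] ++ v ++ [R] ++ w) :=
        ⟨w, rfl⟩
      rcases tot _ _ _ ih ha with h | h
      · calc q <+: u ++ [R] ++ v ++ [R] := h
          _ <+: u ++ [R] ++ v ++ [R] ++ v ++ [R] ++ w := ⟨v ++ [R] ++ w, by simp⟩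
      · obtain ⟨w', hw'⟩ := h
        have hww : w' <+: w := by
          obtain ⟨s, hs⟩ := ih
          rw [← hw', List.append_assoc] at hs
          exact ⟨s, List.append_cancel_left hs⟩
        have := hc u v w' R hw'.symm
        calc q <+: u ++ [R] ++ v ++ [R] ++ v ++ [R] ++ w' := this
          _ <+: u ++ [R] ++ v ++ [R] ++ v ++ [R] ++ w := by
            obtain ⟨s, hs⟩ := hww
            exact ⟨s, by rw [List.append_assoc, hs]⟩
  · intro h u v w R hq
    exact h _ (Pump.rewind u v w R (hq ▸ Pump.base))
end

section
/- Let q be a word over an alphabet. Define Pump(q) as the smallest language containing q and closed under rewinding: if u·R·v·R·w ∈ Pump(q) for a letter R, then u·R·v·R·v·R·w ∈ Pump(q). Then q satisfies condition C3 (whenever q = u·R·v·R·w, q is a factor of u·R·v·R·v·R·w) if and only if q is a factor of every word in Pump(q). -/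
/-- Condition C3: whenever `q = u·R·v·R·w`, `q` is a factor of `u·R·v·R·v·R·w`. -/
def CondC3 {α : Type*} (q : List α) : Prop :=
  ∀ (u v w : List α) (R : α), q = u ++ [R] ++ v ++ [R] ++ w →
    q <:+: u ++ [R] ++ v ++ [R] ++ v ++ [R] ++ w

theorem stmt_5 {α : Type*} (q : List α) :
    CondC3 q ↔ ∀ p, Pump q p → q <:+: p := by
  constructor
  · intro hC3 p hp
    induction hp with
    | base => exact List.infix_rfl
    | rewind u v w R hp ih =>
      obtain ⟨x, y, hxy⟩ := ih
      by_cases h1 : x.length + q.length ≤ u.length + 1 + v.length + 1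
      · -- q is a factor of the prefix u ++ [R] ++ v ++ [R]
        have hpre : x ++ q <+: u ++ [R] ++ v ++ [R] := by
          apply List.prefix_of_prefix_length_le (l₃ := (u ++ [R] ++ v ++ [R]) ++ w)
          · exact ⟨y, by simpa [List.append_assoc] using hxy⟩
          · exact ⟨w, rfl⟩
          · simp [List.length_append]; omega
        have : q <:+: u ++ [R] ++ v ++ [R] := by
          obtain ⟨z, hz⟩ := hpre
          exact ⟨x, z, by simpa [List.append_assoc] using hz⟩
        exact this.trans ⟨[], v ++ [R] ++ w, by simp [List.append_assoc]⟩
      · by_cases h2 : u.length + 1 ≤ x.length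
        · -- q is a factor of the suffix v ++ [R] ++ w
          have hsuf : q ++ y <:+ v ++ [R] ++ w := by
            apply List.suffix_of_suffix_length_le (l₃ := (u ++ [R]) ++ (v ++ [R] ++ w))
            · exact ⟨x, by simpa [List.append_assoc] using hxy⟩
            · exact ⟨u ++ [R], rfl⟩
            · have hlen := congrArg List.length hxy
              simp [List.length_append] at hlen ⊢
              omega
          have : q <:+: v ++ [R] ++ w := by
            obtain ⟨z, hz⟩ := hsuf
            exact ⟨z, y, by simpa [List.append_assoc] using hz⟩
          exact this.trans ⟨u ++ [R] ++ v ++ [R], [], by simp [List.append_assoc]⟩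
        · -- q spans both R's
          push_neg at h1 h2
          have hxu : x <+: u := by
            apply List.prefix_of_prefix_length_le (l₃ := u ++ [R] ++ v ++ [R] ++ w)
            · exact ⟨q ++ y, by simpa [List.append_assoc] using hxy⟩
            · exact ⟨[R] ++ v ++ [R] ++ w, by simp [List.append_assoc]⟩
            · omega
          obtain ⟨u', hu'⟩ := hxu
          have hq : q ++ y = u' ++ [R] ++ v ++ [R] ++ w := by
            have : x ++ (q ++ y) = x ++ (u' ++ [R] ++ v ++ [R] ++ w) := by
              rw [← List.append_assoc, hxy, ← hu']
              simp [List.append_assoc]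
            exact List.append_cancel_left this
          have hu'len : u.length = x.length + u'.length := by
            have := congrArg List.length hu'
            simp [List.length_append] at this; omega
          have hpre : u' ++ [R] ++ v ++ [R] <+: q := by
            apply List.prefix_of_prefix_length_le (l₃ := q ++ y)
            · exact ⟨w, by simpa [List.append_assoc] using hq.symm⟩
            · exact ⟨y, rfl⟩
            · simp [List.length_append]; omega
          obtain ⟨w', hw'⟩ := hpre
          have hqeq : q = u' ++ [R] ++ v ++ [R] ++ w' := by
            rw [← hw']
          have hwy : w' ++ y = w := by
            have : (u' ++ [R] ++ v ++ [R]) ++ (w' ++ y)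
                = (u' ++ [R] ++ v ++ [R]) ++ w := by
              rw [← List.append_assoc, hw', hq]
            exact List.append_cancel_left this
          have h3 := hC3 u' v w' R hqeq
          refine h3.trans ⟨x, y, ?_⟩
          rw [← hwy, ← hu']
          simp [List.append_assoc]
  · intro h u v w R hq
    exact h _ (Pump.rewind u v w R (hq ▸ Pump.base))
end
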